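/- Assume each ℓ_i is convex and (1/γ)-smooth with γ > 0, and ‖x_i‖ ≤ 1 for all i. Fix a block k and w̄ ∈ ℝ^d, and suppose β* ∈ ℝ^{n_k} maximizes D_k(·; w̄). Let β^(H) be the random result of running LocalSDCA for H iterations on block k with fixed w̄, starting from any β^(0) ∈ ℝ^{n_k}. Then, with s := λnγ/(1+λnγ): E[D_k(β*; w̄) − D_k(β^(H); w̄)] ≤ (1 − s/n_k)^H · (D_k(β*; w̄) − D_k(β^(0); w̄)). -/

import Mathlib

open Finset MeasureTheory

noncomputable section

/-- Squared Euclidean norm of a finite real vector. -/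
def sqnorm {m : ℕ} (v : Fin m → ℝ) : ℝ := ∑ j, v j ^ 2

/-- Euclidean norm of a finite real vector. -/
def euclNorm {m : ℕ} (v : Fin m → ℝ) : ℝ := Real.sqrt (sqnorm v)

/-- Euclidean inner product. -/
def dotp {m : ℕ} (u v : Fin m → ℝ) : ℝ := ∑ j, u j * v j

/-- `g` is the (real-valued) Fenchel conjugate of `f`:
`g u` is the least upper bound of `z ↦ u*z - f z`. -/
def IsFenchelConj (f g : ℝ → ℝ) : Prop :=
  ∀ u : ℝ, IsLUB (Set.range fun z : ℝ => u * z - f z) (g u)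

/-- `f` is smooth with constant `c`: differentiable with `c`-Lipschitz derivative. -/
def SmoothWith (c : ℝ) (f : ℝ → ℝ) : Prop :=
  Differentiable ℝ f ∧ ∀ z z' : ℝ, |deriv f z - deriv f z'| ≤ c * |z - z'|

/-- `g : ℝ → ℝ` is `γ`-strongly convex. -/
def StrongConvexWith (γ : ℝ) (g : ℝ → ℝ) : Prop :=
  ConvexOn ℝ Set.univ fun u => g u - γ / 2 * u ^ 2

variable {n d K : ℕ}

/-- `A α` where the `i`-th column of `A` is `x i / (λ n)`. -/
def matA (lam : ℝ) (x : Fin n → Fin d → ℝ) (α : Fin n → ℝ) : Fin d → ℝ :=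
  ∑ i, (α i / (lam * n)) • x i

/-- The block-`k` subvector `α_[k]` of `α`. -/
def blkOf (part : Fin n → Fin K) (k : Fin K) (α : Fin n → ℝ) :
    {i : Fin n // part i = k} → ℝ :=
  fun i => α i.1

/-- `A_[k] β`: the block-`k` submatrix of `A` applied to a block-`k` vector. -/
def blkA (lam : ℝ) (x : Fin n → Fin d → ℝ) (part : Fin n → Fin K) (k : Fin K)
    (β : {i : Fin n // part i = k} → ℝ) : Fin d → ℝ :=
  ∑ i : {i : Fin n // part i = k}, (β i / (lam * n)) • x i.1

/-- `α⟨k←β⟩`: replace the block-`k` coordinates of `α` by `β`. -/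
def updBlk (part : Fin n → Fin K) (k : Fin K) (α : Fin n → ℝ)
    (β : {i : Fin n // part i = k} → ℝ) : Fin n → ℝ :=
  fun i => if h : part i = k then β ⟨i, h⟩ else α i

/-- `ι_k β`: zero-padding of a block-`k` vector to a full vector. -/
def padBlk (part : Fin n → Fin K) (k : Fin K)
    (β : {i : Fin n // part i = k} → ℝ) : Fin n → ℝ :=
  fun i => if h : part i = k then β ⟨i, h⟩ else 0

/-- The primal objective `P(w)`. -/
def primalObj (lam : ℝ) (x : Fin n → Fin d → ℝ) (l : Fin n → ℝ → ℝ)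
    (w : Fin d → ℝ) : ℝ :=
  lam / 2 * sqnorm w + (1 / (n : ℝ)) * ∑ i, l i (dotp w (x i))

/-- The dual objective `D(α)`. -/
def dualObj (lam : ℝ) (x : Fin n → Fin d → ℝ) (lstar : Fin n → ℝ → ℝ)
    (α : Fin n → ℝ) : ℝ :=
  -(lam / 2) * sqnorm (matA lam x α) - (1 / (n : ℝ)) * ∑ i, lstar i (-(α i))

/-- The local suboptimality `ε_{D,k}(α)` on block `k`. -/
def epsD (lam : ℝ) (x : Fin n → Fin d → ℝ) (lstar : Fin n → ℝ → ℝ)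
    (part : Fin n → Fin K) (k : Fin K) (α : Fin n → ℝ) : ℝ :=
  ⨆ β : {i : Fin n // part i = k} → ℝ,
    dualObj lam x lstar (updBlk part k α β) - dualObj lam x lstar α

/-- `σ_min`: the supremum over nonzero `α` of
`λ²n²·(Σ_k ‖A_[k]α_[k]‖² − ‖Aα‖²)/‖α‖²`. -/
def sigmaMin (lam : ℝ) (x : Fin n → Fin d → ℝ) (part : Fin n → Fin K) : ℝ :=
  sSup { r : ℝ | ∃ α : Fin n → ℝ, α ≠ 0 ∧
    r = lam ^ 2 * (n : ℝ) ^ 2 *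
      ((∑ k, sqnorm (blkA lam x part k (blkOf part k α))) - sqnorm (matA lam x α)) /
        sqnorm α }

/-- The local dual objective `D_k(β; w̄)` on block `k`. -/
def locDual (lam : ℝ) (x : Fin n → Fin d → ℝ) (lstar : Fin n → ℝ → ℝ)
    (part : Fin n → Fin K) (k : Fin K) (wbar : Fin d → ℝ)
    (β : {i : Fin n // part i = k} → ℝ) : ℝ :=
  -(lam / 2) * sqnorm (wbar + blkA lam x part k β)
    - (1 / (n : ℝ)) * ∑ i : {i : Fin n // part i = k}, lstar i.1 (-(β i))
    + lam / 2 * sqnorm wbar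

/-- The local primal objective `P_k(v; w̄)` on block `k`. -/
def locPrimal (lam : ℝ) (x : Fin n → Fin d → ℝ) (l : Fin n → ℝ → ℝ)
    (part : Fin n → Fin K) (k : Fin K) (wbar v : Fin d → ℝ) : ℝ :=
  (1 / (n : ℝ)) * ∑ i : {i : Fin n // part i = k}, l i.1 (dotp (wbar + v) (x i.1))
    + lam / 2 * sqnorm v

/-- Run `H` iterations of the coordinate-wise step `st`, where `ω` lists
the (randomly chosen) coordinates used in the successive iterations. -/
def iterRun {γ : Type*} {ι : Type*} (st : ι → γ → γ) :
    (H : ℕ) → (Fin H → ι) → γ → γ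
  | 0, _, b => b
  | H + 1, ω, b => iterRun st H (fun h => ω h.succ) (st (ω 0) b)

/-!
Write `z_i = ⟨w̄ + A_[k]β, x_i⟩` and `P_k` for the local primal objective at `v = A_[k]β`. The
duality gap splits as `n (P_k - D_k(β)) = ∑_i (ℓ_i(z_i) + ℓ_i*(-β_i) + β_i z_i)`. Since `ℓ_i` is
`1/γ`-smooth, `ℓ_i*` is `γ`-strongly convex, and with `‖x_i‖ ≤ 1` this makes the explicit update
`β_i ↦ β_i + s (-ℓ_i'(z_i) - β_i)` gain at least `s / n` times the `i`-th term of the gap. The exact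
coordinate maximisation of LocalSDCA gains at least as much, so averaging over `i` the expected gain
is at least `s / n_k` times the gap, which by weak duality dominates `D_k(β*) - D_k(β)`. Hence the
expected suboptimality contracts by `1 - s / n_k` in each step.
-/

section Conjugate

variable {f g : ℝ → ℝ} {γ : ℝ}

theorem ConvexOn.add_deriv_mul_sub_le (hf : ConvexOn ℝ Set.univ f) (hd : Differentiable ℝ f)
    (z y : ℝ) : f z + deriv f z * (y - z) ≤ f y := by
  rcases lt_trichotomy z y with h | rfl | h
  · have hslope := hf.deriv_le_slope (Set.mem_univ z) (Set.mem_univ y) h (hd z)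
    rw [slope_def_field, le_div_iff₀ (sub_pos.2 h)] at hslope
    linarith
  · simp
  · have hslope := hf.slope_le_deriv (Set.mem_univ y) (Set.mem_univ z) h (hd z)
    rw [slope_def_field, div_le_iff₀ (sub_pos.2 h)] at hslope
    linarith

theorem SmoothWith.hasDerivAt_sq_div_sub (hf : SmoothWith (1 / γ) f) (t : ℝ) :
    HasDerivAt (fun t => t ^ 2 / (2 * γ) - f t) (t / γ - deriv f t) t := by
  refine (((hasDerivAt_pow 2 t).div_const (2 * γ)).sub (hf.1 t).hasDerivAt).congr_deriv ?_
  rw [Nat.cast_ofNat, pow_one, mul_div_mul_left _ _ two_ne_zero]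

theorem SmoothWith.convexOn_sq_div_sub (hf : SmoothWith (1 / γ) f) :
    ConvexOn ℝ Set.univ fun t => t ^ 2 / (2 * γ) - f t := by
  refine Monotone.convexOn_univ_of_deriv (fun t => (hf.hasDerivAt_sq_div_sub t).differentiableAt)
    fun t t' htt' => ?_
  rw [(hf.hasDerivAt_sq_div_sub t).deriv, (hf.hasDerivAt_sq_div_sub t').deriv]
  have hlip := (abs_le.1 (hf.2 t' t)).2
  rw [abs_of_nonneg (sub_nonneg.2 htt')] at hlip
  have : t' / γ - t / γ = 1 / γ * (t' - t) := by ring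
  linarith

theorem SmoothWith.le_add_deriv_mul_add_sq (hγ : 0 < γ) (hf : SmoothWith (1 / γ) f) (y y' : ℝ) :
    f y' ≤ f y + deriv f y * (y' - y) + (y' - y) ^ 2 / (2 * γ) := by
  have htangent := hf.convexOn_sq_div_sub.add_deriv_mul_sub_le
    (fun t => (hf.hasDerivAt_sq_div_sub t).differentiableAt) y y'
  rw [(hf.hasDerivAt_sq_div_sub y).deriv] at htangent
  have : y' ^ 2 / (2 * γ) - y ^ 2 / (2 * γ) - y / γ * (y' - y) = (y' - y) ^ 2 / (2 * γ) := by
    field_simp; ring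
  linarith

theorem IsFenchelConj.mul_sub_le (hfg : IsFenchelConj f g) (u z : ℝ) : u * z - f z ≤ g u :=
  (hfg u).1 ⟨z, rfl⟩

theorem IsFenchelConj.apply_deriv (hfg : IsFenchelConj f g) (hf : ConvexOn ℝ Set.univ f)
    (hd : Differentiable ℝ f) (z : ℝ) : g (deriv f z) = deriv f z * z - f z := by
  refine le_antisymm ((hfg (deriv f z)).2 ?_) (hfg.mul_sub_le _ z)
  rintro _ ⟨y, rfl⟩
  have := hf.add_deriv_mul_sub_le hd z y
  dsimp only
  linarith

/-- Fenchel–Young, sharpened by smoothness: test the supremum defining `g u` at the point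
`y + γ (u - f' y)` and bound `f` there by the quadratic upper bound. -/
theorem IsFenchelConj.mul_sub_add_sq_le (hfg : IsFenchelConj f g) (hγ : 0 < γ)
    (hf : SmoothWith (1 / γ) f) (u y : ℝ) :
    u * y - f y + γ / 2 * (u - deriv f y) ^ 2 ≤ g u := by
  have hyoung := hfg.mul_sub_le u (y + γ * (u - deriv f y))
  have hquad := hf.le_add_deriv_mul_add_sq hγ y (y + γ * (u - deriv f y))
  have : (y + γ * (u - deriv f y) - y) ^ 2 / (2 * γ) = γ / 2 * (u - deriv f y) ^ 2 := by
    field_simp; ring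
  nlinarith

theorem IsFenchelConj.strongConvexOn (hfg : IsFenchelConj f g) (hγ : 0 < γ)
    (hf : SmoothWith (1 / γ) f) : StrongConvexOn Set.univ γ g := by
  refine ⟨convex_univ, fun u _ v _ a b ha hb hab => ?_⟩
  simp only [smul_eq_mul, Real.norm_eq_abs, sq_abs]
  refine le_of_forall_pos_le_add fun ε hε => ?_
  obtain ⟨_, ⟨y, rfl⟩, hy, -⟩ := (hfg (a * u + b * v)).exists_between (sub_lt_self _ hε)
  have hu := mul_le_mul_of_nonneg_left (hfg.mul_sub_add_sq_le hγ hf u y) ha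
  have hv := mul_le_mul_of_nonneg_left (hfg.mul_sub_add_sq_le hγ hf v y) hb
  have hvar : a * b * (u - v) ^ 2 ≤ a * (u - deriv f y) ^ 2 + b * (v - deriv f y) ^ 2 := by
    rw [← sub_nonneg]
    have : a * (u - deriv f y) ^ 2 + b * (v - deriv f y) ^ 2 - a * b * (u - v) ^ 2
        = (a * (u - deriv f y) + b * (v - deriv f y)) ^ 2 := by
      rw [eq_sub_of_add_eq hab]; ring
    rw [this]; positivity
  have hvar' := mul_le_mul_of_nonneg_left hvar (half_pos hγ).le
  obtain rfl : b = 1 - a := by linarith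
  dsimp only at hy
  linarith

end Conjugate

section Vectors

variable {m : ℕ}

theorem sqnorm_nonneg (v : Fin m → ℝ) : 0 ≤ sqnorm v :=
  Finset.sum_nonneg fun _ _ => sq_nonneg _

theorem sqnorm_le_one_of_euclNorm_le_one {v : Fin m → ℝ} (hv : euclNorm v ≤ 1) : sqnorm v ≤ 1 :=
  Real.sqrt_le_one.1 hv

theorem dotp_self (v : Fin m → ℝ) : dotp v v = sqnorm v := by
  simp only [dotp, sqnorm, sq]

theorem dotp_add_left (u v w : Fin m → ℝ) : dotp (u + v) w = dotp u w + dotp v w := by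
  simp only [dotp, Pi.add_apply, add_mul, Finset.sum_add_distrib]

theorem dotp_smul_right (u v : Fin m → ℝ) (t : ℝ) : dotp u (t • v) = t * dotp u v := by
  simp only [dotp, Pi.smul_apply, smul_eq_mul, Finset.mul_sum]
  exact Finset.sum_congr rfl fun _ _ => by ring

theorem sqnorm_add (u v : Fin m → ℝ) : sqnorm (u + v) = sqnorm u + 2 * dotp u v + sqnorm v := by
  simp only [sqnorm, dotp, Pi.add_apply, Finset.mul_sum, ← Finset.sum_add_distrib]
  exact Finset.sum_congr rfl fun _ _ => by ring

theorem sqnorm_smul (t : ℝ) (v : Fin m → ℝ) : sqnorm (t • v) = t ^ 2 * sqnorm v := by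
  simp only [sqnorm, Pi.smul_apply, smul_eq_mul, Finset.mul_sum, mul_pow]

theorem two_mul_dotp_le (u v : Fin m → ℝ) : 2 * dotp u v ≤ sqnorm u + sqnorm v := by
  have h := sqnorm_nonneg (u + (-1 : ℝ) • v)
  rw [sqnorm_add, dotp_smul_right, sqnorm_smul] at h
  linarith

end Vectors

section Blocks

variable (lam : ℝ) (x : Fin n → Fin d → ℝ) {part : Fin n → Fin K} {k : Fin K}

theorem blkA_update (β : {i : Fin n // part i = k} → ℝ) (i : {i : Fin n // part i = k}) (c : ℝ) :
    blkA lam x part k (Function.update β i c)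
      = blkA lam x part k β + ((c - β i) / (lam * n)) • x i.1 := by
  rw [← sub_eq_iff_eq_add', blkA, blkA, ← Finset.sum_sub_distrib]
  refine (Fintype.sum_eq_single i fun j hj => ?_).trans ?_
  · simp [Function.update_of_ne hj]
  · simp [sub_div, sub_smul]

theorem sum_mul_dotp_eq_dotp_blkA (hlam : lam ≠ 0) (hn : n ≠ 0) (w : Fin d → ℝ)
    (β : {i : Fin n // part i = k} → ℝ) :
    ∑ i, β i * dotp w (x i.1) = lam * n * dotp w (blkA lam x part k β) := by
  simp only [dotp, blkA, Finset.sum_apply, Pi.smul_apply, smul_eq_mul, Finset.mul_sum]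
  rw [Finset.sum_comm]
  refine Finset.sum_congr rfl fun i _ => Finset.sum_congr rfl fun j _ => ?_
  field_simp

end Blocks

section LocalDual

variable {lam γ : ℝ} {x : Fin n → Fin d → ℝ} {l lstar : Fin n → ℝ → ℝ}
  {part : Fin n → Fin K} {k : Fin K} {wbar : Fin d → ℝ}

def locMargin (lam : ℝ) (x : Fin n → Fin d → ℝ) (part : Fin n → Fin K) (k : Fin K)
    (wbar : Fin d → ℝ) (β : {i : Fin n // part i = k} → ℝ) (i : Fin n) : ℝ :=
  dotp (wbar + blkA lam x part k β) (x i)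

theorem locDual_update_sub (hlam : lam ≠ 0) (hn : n ≠ 0) (β : {i : Fin n // part i = k} → ℝ)
    (i : {i : Fin n // part i = k}) (c : ℝ) :
    locDual lam x lstar part k wbar (Function.update β i c) - locDual lam x lstar part k wbar β
      = -(c - β i) * locMargin lam x part k wbar β i / n
        - (c - β i) ^ 2 * sqnorm (x i) / (2 * lam * n ^ 2)
        - (lstar i (-c) - lstar i (-β i)) / n := by
  have hsum : ∑ j : {i : Fin n // part i = k}, lstar j.1 (-Function.update β i c j)
      - ∑ j : {i : Fin n // part i = k}, lstar j.1 (-β j) = lstar i (-c) - lstar i (-β i) := by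
    rw [← Finset.sum_sub_distrib]
    refine (Fintype.sum_eq_single i fun j hj => ?_).trans ?_
    · simp [Function.update_of_ne hj]
    · simp
  have hsq := sqnorm_add (wbar + blkA lam x part k β) (((c - β i) / (lam * n)) • x i.1)
  rw [dotp_smul_right, sqnorm_smul] at hsq
  simp only [locDual, locMargin, blkA_update, ← add_assoc, hsq, ← hsum]
  field_simp
  ring

theorem locDual_le_locPrimal (hlam : 0 < lam) (hn : n ≠ 0)
    (hconj : ∀ i, IsFenchelConj (l i) (lstar i)) (β : {i : Fin n // part i = k} → ℝ)
    (v : Fin d → ℝ) :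
    locDual lam x lstar part k wbar β ≤ locPrimal lam x l part k wbar v := by
  have hyoung : -∑ i : {i : Fin n // part i = k}, lstar i (-β i)
      ≤ ∑ i : {i : Fin n // part i = k},
          (β i * dotp (wbar + v) (x i) + l i (dotp (wbar + v) (x i))) := by
    rw [← Finset.sum_neg_distrib]
    refine Finset.sum_le_sum fun i _ => ?_
    linarith [(hconj i).mul_sub_le (-β i) (dotp (wbar + v) (x i))]
  rw [Finset.sum_add_distrib, sum_mul_dotp_eq_dotp_blkA lam x hlam.ne' hn, dotp_add_left] at hyoung
  have hyoung' : -(1 / (n : ℝ)) * ∑ i : {i : Fin n // part i = k}, lstar i (-β i)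
      ≤ lam * (dotp wbar (blkA lam x part k β) + dotp v (blkA lam x part k β))
        + 1 / (n : ℝ) * ∑ i : {i : Fin n // part i = k}, l i (dotp (wbar + v) (x i)) := by
    calc _ = 1 / (n : ℝ) * -∑ i : {i : Fin n // part i = k}, lstar i (-β i) := by ring
      _ ≤ 1 / (n : ℝ) * (lam * n * (dotp wbar (blkA lam x part k β)
            + dotp v (blkA lam x part k β)) + ∑ i : {i : Fin n // part i = k},
              l i (dotp (wbar + v) (x i))) := by gcongr
      _ = _ := by field_simp
  have hcs := mul_le_mul_of_nonneg_left (two_mul_dotp_le v (blkA lam x part k β)) hlam.le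
  simp only [locDual, locPrimal, sqnorm_add]
  linarith

theorem mul_locPrimal_sub_locDual (hlam : lam ≠ 0) (hn : n ≠ 0)
    (β : {i : Fin n // part i = k} → ℝ) :
    n * (locPrimal lam x l part k wbar (blkA lam x part k β) - locDual lam x lstar part k wbar β)
      = ∑ i : {i : Fin n // part i = k}, (l i (locMargin lam x part k wbar β i) + lstar i (-β i)
          + β i * locMargin lam x part k wbar β i) := by
  rw [Finset.sum_add_distrib, Finset.sum_add_distrib]
  simp only [locMargin]
  rw [sum_mul_dotp_eq_dotp_blkA lam x hlam hn, dotp_add_left, dotp_self]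
  simp only [locDual, locPrimal, sqnorm_add]
  field_simp
  ring

end LocalDual

section CoordinateAscent

variable {lam γ : ℝ} {x : Fin n → Fin d → ℝ} {l lstar : Fin n → ℝ → ℝ}
  {part : Fin n → Fin K} {k : Fin K} {wbar : Fin d → ℝ}

/-- Moving `β i` the fraction `s` of the way to `-ℓ_i'(z_i)` recovers the fraction `s / n` of the
`i`-th term of the duality gap: the loss of the quadratic part is paid for by the strong convexity
of `ℓ_i*`. -/
theorem mul_gap_le_locDual_update_sub (hlam : 0 < lam) (hn : n ≠ 0) (hγ : 0 < γ)
    (i : {i : Fin n // part i = k}) (hconj : IsFenchelConj (l i) (lstar i))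
    (hconv : ConvexOn ℝ Set.univ (l i)) (hsmooth : SmoothWith (1 / γ) (l i)) {s : ℝ}
    (hs0 : 0 ≤ s) (hs1 : s ≤ 1) (hsx : s * sqnorm (x i) ≤ lam * n * γ * (1 - s))
    (β : {i : Fin n // part i = k} → ℝ) :
    s / n * (l i (locMargin lam x part k wbar β i) + lstar i (-β i)
        + β i * locMargin lam x part k wbar β i)
      ≤ locDual lam x lstar part k wbar (Function.update β i
            (β i + s * (-deriv (l i) (locMargin lam x part k wbar β i) - β i)))
        - locDual lam x lstar part k wbar β := by
  rw [locDual_update_sub hlam.ne' hn, add_sub_cancel_left]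
  set z := locMargin lam x part k wbar β i
  set b := deriv (l i) z
  have hn' : (0 : ℝ) < n := by positivity
  have hb : lstar i b = b * z - l i z := hconj.apply_deriv hconv hsmooth.1 z
  have hsc : lstar i (-(β i + s * (-b - β i)))
      ≤ s * lstar i b + (1 - s) * lstar i (-β i) - s * (1 - s) * (γ / 2 * (b + β i) ^ 2) := by
    have h := (hconj.strongConvexOn hγ hsmooth).2 (Set.mem_univ b) (Set.mem_univ (-β i)) hs0
      (sub_nonneg.2 hs1) (add_sub_cancel s 1)
    simp only [smul_eq_mul, Real.norm_eq_abs, sq_abs, sub_neg_eq_add] at h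
    convert h using 2
    ring
  have hcoef : (s * (-b - β i)) ^ 2 * sqnorm (x i) / (2 * lam * n ^ 2)
      ≤ s * (1 - s) * (γ / 2 * (b + β i) ^ 2) / n := by
    calc _ = s * sqnorm (x i) * (s * (b + β i) ^ 2 / (2 * lam * n ^ 2)) := by ring
      _ ≤ lam * n * γ * (1 - s) * (s * (b + β i) ^ 2 / (2 * lam * n ^ 2)) := by gcongr
      _ = _ := by field_simp
  have hsc' := div_le_div_of_nonneg_right hsc hn'.le
  rw [hb] at hsc'
  linear_combination hsc' + hcoef

theorem mul_sub_le_sum_locDual_step_sub (hlam : 0 < lam) (hn : n ≠ 0) (hγ : 0 < γ)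
    (hx : ∀ i, euclNorm (x i) ≤ 1) (hconj : ∀ i, IsFenchelConj (l i) (lstar i))
    (hconv : ∀ i, ConvexOn ℝ Set.univ (l i)) (hsmooth : ∀ i, SmoothWith (1 / γ) (l i))
    {s : ℝ} (hs0 : 0 ≤ s) (hs : s ≤ lam * n * γ * (1 - s))
    (st : {i : Fin n // part i = k} → ({i : Fin n // part i = k} → ℝ) →
      ({i : Fin n // part i = k} → ℝ))
    (hst_max : ∀ i β c, locDual lam x lstar part k wbar (Function.update β i c)
      ≤ locDual lam x lstar part k wbar (st i β))
    (β' β : {i : Fin n // part i = k} → ℝ) :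
    s * (locDual lam x lstar part k wbar β' - locDual lam x lstar part k wbar β)
      ≤ ∑ i, (locDual lam x lstar part k wbar (st i β) - locDual lam x lstar part k wbar β) := by
  have hL : 0 < lam * n * γ := by positivity
  have hs1 : s ≤ 1 := by nlinarith
  have hsx : ∀ i, s * sqnorm (x i) ≤ lam * n * γ * (1 - s) := fun i =>
    (mul_le_of_le_one_right hs0 (sqnorm_le_one_of_euclNorm_le_one (hx i))).trans hs
  calc _ ≤ s * (locPrimal lam x l part k wbar (blkA lam x part k β)
          - locDual lam x lstar part k wbar β) := by
        gcongr
        exact locDual_le_locPrimal hlam hn hconj β' _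
    _ = ∑ i : {i : Fin n // part i = k}, s / n * (l i (locMargin lam x part k wbar β i)
          + lstar i (-β i) + β i * locMargin lam x part k wbar β i) := by
        rw [← Finset.mul_sum, ← mul_locPrimal_sub_locDual hlam.ne' hn]
        field_simp
    _ ≤ _ := Finset.sum_le_sum fun i _ => (mul_gap_le_locDual_update_sub hlam hn hγ i (hconj i)
          (hconv i) (hsmooth i) hs0 hs1 (hsx i) β).trans (sub_le_sub_right (hst_max i β _) _)

end CoordinateAscent

theorem sum_iterRun_le_pow_mul {α ι : Type*} [Fintype ι] (st : ι → α → α) (f : α → ℝ) {ρ : ℝ}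
    (hρ : 0 ≤ ρ) (hf : ∀ b, ∑ i, f (st i b) ≤ ρ * f b) (H : ℕ) (b : α) :
    ∑ ω : Fin H → ι, f (iterRun st H ω b) ≤ ρ ^ H * f b := by
  induction H generalizing b with
  | zero => simp [iterRun]
  | succ H ih =>
    calc ∑ ω : Fin (H + 1) → ι, f (iterRun st (H + 1) ω b)
        = ∑ i, ∑ ω : Fin H → ι, f (iterRun st H ω (st i b)) := by
          rw [← (Fin.consEquiv fun _ => ι).sum_comp, Fintype.sum_prod_type]
          rfl
      _ ≤ ∑ i, ρ ^ H * f (st i b) := Finset.sum_le_sum fun i _ => ih (st i b)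
      _ ≤ ρ ^ (H + 1) * f b := by
          rw [← Finset.mul_sum, pow_succ, mul_assoc]
          exact mul_le_mul_of_nonneg_left (hf b) (pow_nonneg hρ H)

theorem localSDCA_local_convergence_general
    (n d K : ℕ) (hn : 0 < n)
    (lam γ : ℝ) (hlam : 0 < lam) (hγ : 0 < γ)
    (x : Fin n → Fin d → ℝ) (hx : ∀ i, euclNorm (x i) ≤ 1)
    (l lstar : Fin n → ℝ → ℝ)
    (hconj : ∀ i, IsFenchelConj (l i) (lstar i))
    (hconv : ∀ i, ConvexOn ℝ Set.univ (l i))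
    (hsmooth : ∀ i, SmoothWith (1 / γ) (l i))
    (part : Fin n → Fin K) (k : Fin K) (hk : ∃ i, part i = k)
    (wbar : Fin d → ℝ)
    (βstar : {i : Fin n // part i = k} → ℝ)
    (β0 : {i : Fin n // part i = k} → ℝ) (H : ℕ)
    -- one LocalSDCA step on coordinate `i`: replace `β i` by the maximizing value
    (st : {i : Fin n // part i = k} → ({i : Fin n // part i = k} → ℝ) →
      ({i : Fin n // part i = k} → ℝ))
    (hst_max : ∀ i β c,
      locDual lam x lstar part k wbar (Function.update β i c)
        ≤ locDual lam x lstar part k wbar (st i β))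
    (s : ℝ) (hs : s = lam * n * γ / (1 + lam * n * γ)) :
    -- E[D_k(β*;w̄) − D_k(β^(H);w̄)], averaging over the uniformly chosen coordinates
    (∑ ω : Fin H → {i : Fin n // part i = k},
        (locDual lam x lstar part k wbar βstar
          - locDual lam x lstar part k wbar (iterRun st H ω β0)))
      / (Fintype.card {i : Fin n // part i = k} : ℝ) ^ H
    ≤ (1 - s / (Fintype.card {i : Fin n // part i = k} : ℝ)) ^ H *
        (locDual lam x lstar part k wbar βstar - locDual lam x lstar part k wbar β0) := by
  set D := locDual lam x lstar part k wbar
  set N : ℝ := (Fintype.card {i : Fin n // part i = k} : ℝ)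
  obtain ⟨i, hi⟩ := hk
  have hN : 1 ≤ N := Nat.one_le_cast.2 (Fintype.card_pos_iff.2 ⟨⟨i, hi⟩⟩)
  have hL : 0 < lam * n * γ := by positivity
  have hs0 : 0 ≤ s := hs ▸ by positivity
  have hs1 : s ≤ 1 := by rw [hs, div_le_one (by linarith)]; linarith
  have hs_eq : s = lam * n * γ * (1 - s) := by rw [hs]; field_simp; ring
  have hcontract : ∀ b, ∑ i, (D βstar - D (st i b)) ≤ (N - s) * (D βstar - D b) := fun b => by
    have h := mul_sub_le_sum_locDual_step_sub hlam hn.ne' hγ hx hconj hconv hsmooth hs0 hs_eq.le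
      st hst_max βstar b
    have hsplit : ∑ i, (D βstar - D (st i b)) = N * (D βstar - D b) - ∑ i, (D (st i b) - D b) := by
      simp only [Finset.sum_sub_distrib, Finset.sum_const, Finset.card_univ, nsmul_eq_mul, N]
      ring
    linarith
  have hsum := sum_iterRun_le_pow_mul st (fun b => D βstar - D b) (by linarith) hcontract H β0
  calc _ ≤ (N - s) ^ H * (D βstar - D β0) / N ^ H := by gcongr
    _ = _ := by rw [one_sub_div (by positivity), div_pow]; ring

/-- geometric convergence of LocalSDCA on the local subproblem. -/
theorem localSDCA_local_convergence
    (n d K : ℕ) (hn : 0 < n) (hd : 0 < d) (hK : 0 < K)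
    (lam γ : ℝ) (hlam : 0 < lam) (hγ : 0 < γ)
    (x : Fin n → Fin d → ℝ) (hx : ∀ i, euclNorm (x i) ≤ 1)
    (l lstar : Fin n → ℝ → ℝ)
    (hconj : ∀ i, IsFenchelConj (l i) (lstar i))
    (hconv : ∀ i, ConvexOn ℝ Set.univ (l i))
    (hsmooth : ∀ i, SmoothWith (1 / γ) (l i))
    (part : Fin n → Fin K) (k : Fin K) (hk : ∃ i, part i = k)
    (wbar : Fin d → ℝ)
    (βstar : {i : Fin n // part i = k} → ℝ)
    (hβstar : ∀ β, locDual lam x lstar part k wbar β ≤ locDual lam x lstar part k wbar βstar)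
    (β0 : {i : Fin n // part i = k} → ℝ) (H : ℕ)
    -- one LocalSDCA step on coordinate `i`: replace `β i` by the maximizing value
    (st : {i : Fin n // part i = k} → ({i : Fin n // part i = k} → ℝ) →
      ({i : Fin n // part i = k} → ℝ))
    (hst_coord : ∀ i β j, j ≠ i → st i β j = β j)
    (hst_max : ∀ i β c,
      locDual lam x lstar part k wbar (Function.update β i c)
        ≤ locDual lam x lstar part k wbar (st i β))
    (s : ℝ) (hs : s = lam * n * γ / (1 + lam * n * γ)) :
    -- E[D_k(β*;w̄) − D_k(β^(H);w̄)], averaging over the uniformly chosen coordinates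
    (∑ ω : Fin H → {i : Fin n // part i = k},
        (locDual lam x lstar part k wbar βstar
          - locDual lam x lstar part k wbar (iterRun st H ω β0)))
      / (Fintype.card {i : Fin n // part i = k} : ℝ) ^ H
    ≤ (1 - s / (Fintype.card {i : Fin n // part i = k} : ℝ)) ^ H *
        (locDual lam x lstar part k wbar βstar - locDual lam x lstar part k wbar β0) :=
  localSDCA_local_convergence_general n d K hn lam γ hlam hγ x hx l lstar hconj hconv hsmooth part k
    hk wbar βstar β0 H st hst_max s hs
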